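/- Vanishing discretization error along the subsequence (Lemma 9). Assume the full context and the subsequence setting. Then for every t ∈ [0, T), lim_{k→∞} ‖f_{n_k}(t)‖ = 0; equivalently, lim_{k→∞} ‖x̂(T_{n_k} + t) − z_{n_k}(t)‖ = 0 for every t ∈ [0, T). -/

import Mathlib

open Filter MeasureTheory Set intervalIntegral

lemma aux_tel {E : Type*} [AddCommGroup E] [Module ℝ E] (α : ℕ → ℝ) (v : ℕ → E) (x : ℕ → E)
    (hx : ∀ n, x (n + 1) = x n + α n • v n) :
    ∀ a b : ℕ, a ≤ b → x b = x a + ∑ i ∈ Finset.Ico a b, α i • v i := by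
  intro a b hab
  induction b, hab using Nat.le_induction with
  | base => simp
  | succ b hab ih =>
    rw [hx b, ih, Finset.sum_Ico_succ_top hab, add_assoc]

lemma aux_part {M : Type*} [AddCommMonoid M] (a : ℕ → ℕ) (ha : Monotone a) (f : ℕ → M) (J : ℕ) :
    ∑ j ∈ Finset.range J, ∑ i ∈ Finset.Ico (a j) (a (j + 1)), f i
      = ∑ i ∈ Finset.Ico (a 0) (a J), f i := by
  induction J with
  | zero => simp
  | succ J ih =>
    rw [Finset.sum_range_succ, ih, Finset.sum_Ico_consecutive]
    · exact ha (Nat.zero_le J)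
    · exact ha (Nat.le_succ J)

lemma aux_II {E : Type*} [NormedAddCommGroup E] {f : ℝ → E} (hf : AEStronglyMeasurable f volume)
    {C : ℝ} {a b : ℝ} (hC : ∀ v ∈ Set.uIcc a b, ‖f v‖ ≤ C) :
    IntervalIntegrable f volume a b := by
  rw [intervalIntegrable_iff]
  refine Measure.integrableOn_of_bounded (M := C) ?_ hf ?_
  · simp [Set.uIoc, Real.volume_Ioc]
  · refine (ae_restrict_iff' measurableSet_uIoc).2 (Filter.Eventually.of_forall fun v hv => ?_)
    exact hC v (Set.Ioc_subset_Icc_self hv)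


lemma aux_gronwall {φ : ℝ → ℝ} {Kc εc s₀ : ℝ} (hK : 0 ≤ Kc) (hε : 0 ≤ εc) (hs : 0 ≤ s₀)
    (hφ0 : ∀ u, 0 ≤ φ u)
    (hint : IntervalIntegrable φ volume 0 s₀)
    (hrc : ∀ u ∈ Set.Ico 0 s₀, ContinuousWithinAt φ (Set.Ici u) u)
    (hineq : ∀ u ∈ Set.Icc 0 s₀, φ u ≤ εc + Kc * ∫ v in (0:ℝ)..u, φ v) :
    φ s₀ ≤ εc * Real.exp (Kc * s₀) := by
  set Ψ : ℝ → ℝ := fun u => ∫ v in (0:ℝ)..u, φ v with hΨ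
  have hmono : ∀ u, 0 ≤ u → u ≤ s₀ → IntervalIntegrable φ volume 0 u := by
    intro u h0 h1
    exact hint.mono_set (by rw [Set.uIcc_of_le h0, Set.uIcc_of_le hs]; exact Set.Icc_subset_Icc le_rfl h1)
  have hΨcont : ContinuousOn Ψ (Set.Icc 0 s₀) := by
    have := continuousOn_primitive_interval' (μ := volume) (f := φ) (b₁ := 0) (b₂ := s₀)
      hint (Set.left_mem_uIcc)
    rwa [Set.uIcc_of_le hs] at this
  have hΨnonneg : ∀ u ∈ Set.Icc 0 s₀, 0 ≤ Ψ u := by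
    intro u hu
    exact intervalIntegral.integral_nonneg hu.1 (fun v _ => hφ0 v)
  have hderiv : ∀ u ∈ Set.Ico 0 s₀, HasDerivWithinAt Ψ (φ u) (Set.Ici u) u := by
    intro u hu
    refine intervalIntegral.integral_hasDerivWithinAt_right (hmono u hu.1 hu.2.le)
      (s := Set.Ici u) (t := Set.Ioi u) ⟨Set.Ioo u s₀, ?_, ?_⟩ ((hrc u hu).mono Set.Ioi_subset_Ici_self)
    · exact Ioo_mem_nhdsGT_of_mem ⟨le_rfl, hu.2⟩
    · refine hint.1.aestronglyMeasurable.mono_measure (Measure.restrict_mono ?_ le_rfl)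
      exact fun v hv => ⟨lt_of_le_of_lt hu.1 hv.1, hv.2.le⟩
  have hbound : ∀ u ∈ Set.Ico 0 s₀, ‖φ u‖ ≤ Kc * ‖Ψ u‖ + εc := by
    intro u hu
    have h1 := hineq u ⟨hu.1, hu.2.le⟩
    rw [Real.norm_of_nonneg (hφ0 u), Real.norm_of_nonneg (hΨnonneg u ⟨hu.1, hu.2.le⟩)]
    linarith
  have h0 : ‖Ψ 0‖ ≤ 0 := by simp [hΨ]
  have := norm_le_gronwallBound_of_norm_deriv_right_le hΨcont hderiv h0 hbound s₀ ⟨hs, le_rfl⟩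
  have hfinal := hineq s₀ ⟨hs, le_rfl⟩
  rw [Real.norm_of_nonneg (hΨnonneg s₀ ⟨hs, le_rfl⟩)] at this
  rcases eq_or_ne Kc 0 with hK0 | hK0
  · subst hK0
    simpa using le_trans hfinal (by nlinarith [Real.exp_pos (0 * s₀)])
  · have hgb : gronwallBound 0 Kc εc (s₀ - 0) = εc / Kc * (Real.exp (Kc * s₀) - 1) := by
      rw [gronwallBound_of_K_ne_0 hK0]
      ring_nf
    rw [hgb] at this
    have hKpos : 0 < Kc := lt_of_le_of_ne hK (Ne.symm hK0)
    have : Kc * Ψ s₀ ≤ εc * (Real.exp (Kc * s₀) - 1) := by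
      have := mul_le_mul_of_nonneg_left this hK
      calc Kc * Ψ s₀ ≤ Kc * (εc / Kc * (Real.exp (Kc * s₀) - 1)) := this
        _ = εc * (Real.exp (Kc * s₀) - 1) := by field_simp
    linarith [hineq s₀ ⟨hs, le_rfl⟩]

section step

variable {E : Type*} [NormedAddCommGroup E] [NormedSpace ℝ E] [CompleteSpace E]
  [MeasurableSpace E] [BorelSpace E] [SecondCountableTopology E]
  (α : ℕ → ℝ) (hα_pos : ∀ n, 0 < α n)
  (t : ℕ → ℝ) (ht : ∀ n, t n = ∑ i ∈ Finset.range n, α i)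
  (m : ℝ → ℕ)
  (hm_le : ∀ s : ℝ, 0 ≤ s → t (m s) ≤ s)
  (hm_max : ∀ s : ℝ, 0 ≤ s → ∀ i : ℕ, t i ≤ s → i ≤ m s)
  (hm_neg : ∀ s : ℝ, s < 0 → m s = 0)

include ht hα_pos in
lemma aux_t_succ : ∀ n, t (n + 1) = t n + α n := by
  intro n; rw [ht, ht, Finset.sum_range_succ]

include ht hα_pos in
lemma aux_t_smono : StrictMono t := by
  apply strictMono_nat_of_lt_succ
  intro n; rw [aux_t_succ α hα_pos t ht]; linarith [hα_pos n]

include ht hα_pos in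
lemma aux_t_nonneg : ∀ n, 0 ≤ t n := by
  intro n
  rw [ht]
  exact Finset.sum_nonneg fun i _ => (hα_pos i).le

include ht hα_pos hm_le hm_max in
lemma aux_m_t : ∀ j, m (t j) = j := by
  intro j
  have h0 := aux_t_nonneg α hα_pos t ht j
  refine le_antisymm ?_ (hm_max (t j) h0 j le_rfl)
  have := hm_le (t j) h0
  exact (aux_t_smono α hα_pos t ht).le_iff_le.mp this

include ht hα_pos hm_le hm_max hm_neg in
lemma aux_m_mono : Monotone m := by
  intro s₁ s₂ h12
  rcases lt_or_ge s₁ 0 with h | h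
  · rw [hm_neg s₁ h]; exact Nat.zero_le _
  · exact hm_max s₂ (le_trans h h12) (m s₁) (le_trans (hm_le s₁ h) h12)

include ht hα_pos hm_le hm_max in
lemma aux_m_eq : ∀ (j : ℕ) (sv : ℝ), t j ≤ sv → sv < t (j + 1) → m sv = j := by
  intro j sv h1 h2
  have h0 : (0:ℝ) ≤ sv := le_trans (aux_t_nonneg α hα_pos t ht j) h1
  refine le_antisymm ?_ (hm_max sv h0 j h1)
  by_contra hcon
  push_neg at hcon
  have : t (j + 1) ≤ t (m sv) := (aux_t_smono α hα_pos t ht).monotone hcon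
  linarith [hm_le sv h0]

include ht hα_pos hm_le hm_max hm_neg in
lemma aux_step_II (F : ℕ → E) (Tn : ℝ) (a b : ℝ) :
    IntervalIntegrable (fun v => F (m (Tn + v))) volume a b := by
  have hmeas : AEStronglyMeasurable (fun v => F (m (Tn + v))) volume := by
    have hmono : Monotone fun v : ℝ => m (Tn + v) := by
      intro v₁ v₂ hv
      exact aux_m_mono α hα_pos t ht m hm_le hm_max hm_neg (by linarith)
    have h1 : Measurable fun v : ℝ => m (Tn + v) := hmono.measurable
    exact (measurable_from_nat.comp h1).aestronglyMeasurable
  set jm := m (Tn + (a ⊔ b)) with hjm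
  refine aux_II hmeas (C := (Finset.range (jm + 1)).sup' (by simp) fun i => ‖F i‖) ?_
  intro v hv
  have : m (Tn + v) ∈ Finset.range (jm + 1) := by
    rw [Finset.mem_range, Nat.lt_succ_iff]
    exact aux_m_mono α hα_pos t ht m hm_le hm_max hm_neg
      (by simp only [add_le_add_iff_left]; exact le_trans hv.2 (by simp [Set.uIcc]))
  exact Finset.le_sup' (f := fun i => ‖F i‖) this


include ht hα_pos hm_le hm_max hm_neg in
lemma aux_step_integral (F : ℕ → E) (M : ℕ) (Tn : ℝ) (hTn : Tn = t M) :
    ∀ u : ℝ, 0 ≤ u →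
      (∫ v in (0:ℝ)..u, F (m (Tn + v)))
        = (∑ i ∈ Finset.Ico M (m (Tn + u)), α i • F i)
          + (Tn + u - t (m (Tn + u))) • F (m (Tn + u)) := by
  have hts := aux_t_smono α hα_pos t ht
  have htn := aux_t_nonneg α hα_pos t ht
  have hmm := aux_m_mono α hα_pos t ht m hm_le hm_max hm_neg
  have hmt := aux_m_t α hα_pos t ht m hm_le hm_max
  have hTn0 : 0 ≤ Tn := hTn ▸ htn M
  have hII : ∀ a b : ℝ, IntervalIntegrable (fun v => F (m (Tn + v))) volume a b :=
    aux_step_II α hα_pos t ht m hm_le hm_max hm_neg F Tn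
  -- integral up to the breakpoints
  have hbp : ∀ j, M ≤ j →
      (∫ v in (0:ℝ)..(t j - Tn), F (m (Tn + v))) = ∑ i ∈ Finset.Ico M j, α i • F i := by
    intro j hj
    induction j, hj using Nat.le_induction with
    | base => simp [hTn]
    | succ j hj ihj =>
      have hw1 : (0:ℝ) ≤ t j - Tn := by
        have : Tn ≤ t j := hTn ▸ hts.monotone hj
        linarith
      have hw2 : t j - Tn ≤ t (j + 1) - Tn := by
        have := (hts (Nat.lt_succ_self j)).le
        linarith
      rw [← intervalIntegral.integral_add_adjacent_intervals (hII 0 (t j - Tn))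
        (hII (t j - Tn) (t (j+1) - Tn)), ihj]
      have hpiece : (∫ v in (t j - Tn)..(t (j+1) - Tn), F (m (Tn + v))) = α j • F j := by
        have hcongr : (∫ v in (t j - Tn)..(t (j+1) - Tn), F (m (Tn + v)))
            = ∫ _v in (t j - Tn)..(t (j+1) - Tn), F j := by
          apply intervalIntegral.integral_congr_ae
          have hae : ∀ᵐ (v : ℝ) ∂volume, v ≠ t (j+1) - Tn := by
            simp [ae_iff, measure_singleton]
          filter_upwards [hae] with v hv hv'
          rw [Set.uIoc_of_le hw2] at hv'
          have hvlt : v < t (j + 1) - Tn := lt_of_le_of_ne hv'.2 hv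
          have h1 : t j ≤ Tn + v := by linarith [hv'.1]
          have h2 : Tn + v < t (j + 1) := by linarith
          rw [aux_m_eq α hα_pos t ht m hm_le hm_max j (Tn + v) h1 h2]
        rw [hcongr, intervalIntegral.integral_const]
        congr 1
        have := aux_t_succ α hα_pos t ht j
        linarith
      rw [hpiece, Finset.sum_Ico_succ_top hj]
  -- general u
  intro u hu
  set j := m (Tn + u) with hjdef
  have hjM : M ≤ j := by
    rw [hjdef, ← hmt M, ← hTn]
    exact hmm (by linarith)
  have htj1 : t j ≤ Tn + u := hm_le (Tn + u) (by linarith)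
  have hw1 : (0:ℝ) ≤ t j - Tn := by
    have : Tn ≤ t j := hTn ▸ hts.monotone hjM
    linarith
  rw [← intervalIntegral.integral_add_adjacent_intervals (hII 0 (t j - Tn)) (hII (t j - Tn) u),
    hbp j hjM]
  have hpiece : (∫ v in (t j - Tn)..u, F (m (Tn + v))) = (Tn + u - t j) • F j := by
    have hcongr : (∫ v in (t j - Tn)..u, F (m (Tn + v))) = ∫ _v in (t j - Tn)..u, F j := by
      apply intervalIntegral.integral_congr
      intro v hv
      rw [Set.uIcc_of_le (by linarith : t j - Tn ≤ u)] at hv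
      have h1 : t j ≤ Tn + v := by linarith [hv.1]
      refine congrArg F (le_antisymm ?_ (hm_max (Tn + v) (by linarith) j h1))
      rw [hjdef]
      exact hmm (by linarith [hv.2])
    rw [hcongr, intervalIntegral.integral_const]
    congr 1
    ring
  rw [hpiece]

end step

set_option maxHeartbeats 4000000 in
theorem vanishing_discretization_error
    {E : Type*} [NormedAddCommGroup E] [NormedSpace ℝ E] [FiniteDimensional ℝ E]
    [Nontrivial E]
    {𝓨 : Type*}
    (α : ℕ → ℝ)
    (hα_pos : ∀ n, 0 < α n)
    (hα_anti : ∀ n, α (n + 1) ≤ α n)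
    (hα_div : Tendsto (fun n => ∑ i ∈ Finset.range n, α i) atTop atTop)
    (hα_to0 : Tendsto α atTop (nhds 0))
    (Cα : ℝ) (hCα_pos : 0 < Cα)
    (hCα : ∀ n, α n - α (n + 1) ≤ Cα * α n ^ 2)
    (t : ℕ → ℝ) (ht : ∀ n, t n = ∑ i ∈ Finset.range n, α i)
    (m : ℝ → ℕ)
    (hm_le : ∀ s : ℝ, 0 ≤ s → t (m s) ≤ s)
    (hm_max : ∀ s : ℝ, 0 ≤ s → ∀ i : ℕ, t i ≤ s → i ≤ m s)
    (hm_neg : ∀ s : ℝ, s < 0 → m s = 0)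
    (T : ℝ) (hT : 0 < T)
    (Tseq : ℕ → ℝ) (hTseq0 : Tseq 0 = 0)
    (hTseq : ∀ n, Tseq (n + 1) = t (m (Tseq n + T) + 1))
    (Y : ℕ → 𝓨) (H : E → 𝓨 → E)
    (x : ℕ → E)
    (hx : ∀ n, x (n + 1) = x n + α n • H (x n) (Y (n + 1)))
    (L : 𝓨 → ℝ) (hL_nonneg : ∀ y, 0 ≤ L y)
    (hH_lip : ∀ x₁ x₂ : E, ∀ y : 𝓨, ‖H x₁ y - H x₂ y‖ ≤ L y * ‖x₁ - x₂‖)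
    (Hinf : E → 𝓨 → E) (κ : ℝ → ℝ) (hκ : Tendsto κ atTop (nhds 0))
    (b : E → 𝓨 → E) (Lb : 𝓨 → ℝ) (hLb_nonneg : ∀ y, 0 ≤ Lb y)
    (hHc : ∀ c : ℝ, 1 ≤ c → ∀ x' : E, ∀ y : 𝓨,
      c⁻¹ • H (c • x') y - Hinf x' y = κ c • b x' y)
    (hb_lip : ∀ x₁ x₂ : E, ∀ y : 𝓨, ‖b x₁ y - b x₂ y‖ ≤ Lb y * ‖x₁ - x₂‖)
    (hHinf_lip : ∀ x₁ x₂ : E, ∀ y : 𝓨, ‖Hinf x₁ y - Hinf x₂ y‖ ≤ L y * ‖x₁ - x₂‖)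
    (h : E → E) (Lbar : ℝ) (hLbar : 0 ≤ Lbar)
    (Lbbar : ℝ) (hLbbar : 0 ≤ Lbbar)
    (hrateH : ∀ τ : ℝ, 0 < τ → ∀ x' : E, ∀ ε : ℝ, 0 < ε → ∃ N : ℕ, ∀ n ≥ N,
      ∀ t₁ t₂ : ℝ, -τ ≤ t₁ → t₁ ≤ t₂ → t₂ ≤ τ →
        ‖∑ i ∈ Finset.Ico (m (t n + t₁)) (m (t n + t₂)),
            α i • (H x' (Y (i + 1)) - h x')‖ ≤ ε)
    (hrateLb : ∀ τ : ℝ, 0 < τ → ∀ ε : ℝ, 0 < ε → ∃ N : ℕ, ∀ n ≥ N,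
      ∀ t₁ t₂ : ℝ, -τ ≤ t₁ → t₁ ≤ t₂ → t₂ ≤ τ →
        |∑ i ∈ Finset.Ico (m (t n + t₁)) (m (t n + t₂)),
            α i * (Lb (Y (i + 1)) - Lbbar)| ≤ ε)
    (hrateL : ∀ τ : ℝ, 0 < τ → ∀ ε : ℝ, 0 < ε → ∃ N : ℕ, ∀ n ≥ N,
      ∀ t₁ t₂ : ℝ, -τ ≤ t₁ → t₁ ≤ t₂ → t₂ ≤ τ →
        |∑ i ∈ Finset.Ico (m (t n + t₁)) (m (t n + t₂)),
            α i * (L (Y (i + 1)) - Lbar)| ≤ ε)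
    (hh_lip : ∀ x₁ x₂ : E, ‖h x₁ - h x₂‖ ≤ Lbar * ‖x₁ - x₂‖)
    (hinf : E → E)
    (hhinf_lip : ∀ x₁ x₂ : E, ‖hinf x₁ - hinf x₂‖ ≤ Lbar * ‖x₁ - x₂‖)
    (hunif : ∀ K : Set E, IsCompact K →
      TendstoUniformlyOn (fun (c : ℝ) (x' : E) => c⁻¹ • h (c • x')) hinf atTop K)
    (r : ℕ → ℝ) (hr : ∀ n, r n = max 1 ‖x (m (Tseq n))‖)
    (nk : ℕ → ℕ) (hnk_mono : StrictMono nk)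
    (hnk_div : Tendsto (fun k => r (nk k)) atTop atTop)
    (xlim : ℝ → E) (hxlim_cont : ContinuousOn xlim (Set.Ico 0 T))
    (hxlim : TendstoUniformlyOn (fun (k : ℕ) (s : ℝ) => (r (nk k))⁻¹ • x (m (Tseq (nk k) + s)))
      xlim atTop (Set.Ico 0 T))
    (z : ℕ → ℝ → E)
    (hz_cont : ∀ n, ContinuousOn (z n) (Set.Ico 0 T))
    (hz : ∀ n : ℕ, ∀ s : ℝ, 0 ≤ s → s < T →
      z n s = (r n)⁻¹ • x (m (Tseq n)) + ∫ u in (0:ℝ)..s, (r n)⁻¹ • h (r n • z n u))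
 :
    ∀ s : ℝ, 0 ≤ s → s < T →
      Tendsto (fun k =>
        ‖(r (nk k))⁻¹ • x (m (Tseq (nk k) + s)) - z (nk k) s‖) atTop (nhds 0) := by
  letI : MeasurableSpace E := borel E
  haveI : BorelSpace E := ⟨rfl⟩
  intro s hs0 hsT
  -- basic monotonicity facts
  have hts : StrictMono t := aux_t_smono α hα_pos t ht
  have htsucc : ∀ n, t (n + 1) = t n + α n := aux_t_succ α hα_pos t ht
  have htn : ∀ n, 0 ≤ t n := aux_t_nonneg α hα_pos t ht
  have hmm : Monotone m := aux_m_mono α hα_pos t ht m hm_le hm_max hm_neg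
  have hmt : ∀ j, m (t j) = j := aux_m_t α hα_pos t ht m hm_le hm_max
  have hαanti : Antitone α := antitone_nat_of_succ_le hα_anti
  have hm_succ : ∀ sv : ℝ, 0 ≤ sv → sv < t (m sv + 1) := by
    intro sv hsv
    by_contra hcon
    push_neg at hcon
    have := hm_max sv hsv (m sv + 1) hcon
    omega
  have ht_Ico : ∀ a bb : ℕ, a ≤ bb → ∑ i ∈ Finset.Ico a bb, α i = t bb - t a := by
    intro a bb hab
    rw [ht, ht, Finset.sum_Ico_eq_sub _ hab]
  -- Tseq facts
  have hTseq_t : ∀ n, ∃ j, Tseq n = t j := by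
    intro n
    cases n with
    | zero => exact ⟨0, by rw [hTseq0, ht]; simp⟩
    | succ n => exact ⟨m (Tseq n + T) + 1, hTseq n⟩
  have hTseq_fix : ∀ n, t (m (Tseq n)) = Tseq n := by
    intro n
    obtain ⟨j, hj⟩ := hTseq_t n
    rw [hj, hmt]
  have hTseq_nonneg : ∀ n, 0 ≤ Tseq n := by
    intro n
    obtain ⟨j, hj⟩ := hTseq_t n
    rw [hj]; exact htn j
  have hTseq_ge : ∀ n : ℕ, (n : ℝ) * T ≤ Tseq n := by
    intro n
    induction n with
    | zero => simp [hTseq0]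
    | succ n ihn =>
      have h1 : (0:ℝ) ≤ Tseq n + T := by linarith [hTseq_nonneg n]
      have h2 := hm_succ (Tseq n + T) h1
      rw [hTseq n]
      push_cast
      nlinarith [h2]
  have hTseqk : Tendsto (fun k => Tseq (nk k)) atTop atTop := by
    apply tendsto_atTop_mono (fun k => le_trans ?_ (hTseq_ge (nk k)))
      (Tendsto.atTop_mul_const hT tendsto_natCast_atTop_atTop)
    have := hnk_mono.le_apply (x := k)
    have : (k:ℝ) ≤ (nk k : ℝ) := by exact_mod_cast this
    nlinarith
  have hM_tendsto : Tendsto (fun k => m (Tseq (nk k))) atTop atTop := by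
    rw [Filter.tendsto_atTop]
    intro N
    filter_upwards [hTseqk.eventually_ge_atTop (t N)] with k hk
    exact hm_max (Tseq (nk k)) (hTseq_nonneg (nk k)) N hk
  have hR1 : ∀ n, (1:ℝ) ≤ r n := by
    intro n; rw [hr]; exact le_max_left _ _
  have hRpos : ∀ n, (0:ℝ) < r n := fun n => lt_of_lt_of_le one_pos (hR1 n)
  -- the scaled interpolation
  set X : ℕ → ℝ → E := fun k u => (r (nk k))⁻¹ • x (m (Tseq (nk k) + u)) with hX
  -- key grid estimate
  have hrH : ∀ x' : E, ∀ τ : ℝ, 0 < τ → ∀ εr : ℝ, 0 < εr → ∀ᶠ k in atTop,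
      ∀ t₁ t₂ : ℝ, -τ ≤ t₁ → t₁ ≤ t₂ → t₂ ≤ τ →
        ‖∑ i ∈ Finset.Ico (m (Tseq (nk k) + t₁)) (m (Tseq (nk k) + t₂)),
            α i • (H x' (Y (i + 1)) - h x')‖ ≤ εr := by
    intro x' τ hτ εr hεr
    obtain ⟨N, hN⟩ := hrateH τ hτ x' εr hεr
    filter_upwards [hM_tendsto.eventually_ge_atTop N] with k hk t₁ t₂ h1 h2 h3
    have := hN (m (Tseq (nk k))) hk t₁ t₂ h1 h2 h3
    rwa [hTseq_fix (nk k)] at this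
  have hLenle : ∀ τ : ℝ, 0 < τ → ∀ᶠ k in atTop, ∀ t₁ t₂ : ℝ, -τ ≤ t₁ → t₁ ≤ t₂ → t₂ ≤ τ →
      (∑ i ∈ Finset.Ico (m (Tseq (nk k) + t₁)) (m (Tseq (nk k) + t₂)), α i) ≤ 2 * τ + α 0 := by
    intro τ hτ
    filter_upwards [hTseqk.eventually_ge_atTop τ] with k hk t₁ t₂ h1 h2 h3
    have h01 : (0:ℝ) ≤ Tseq (nk k) + t₁ := by linarith
    have h02 : (0:ℝ) ≤ Tseq (nk k) + t₂ := by linarith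
    have habW : m (Tseq (nk k) + t₁) ≤ m (Tseq (nk k) + t₂) := hmm (by linarith)
    rw [ht_Ico _ _ habW]
    have e1 : t (m (Tseq (nk k) + t₂)) ≤ Tseq (nk k) + t₂ := hm_le _ h02
    have e2 : Tseq (nk k) + t₁ < t (m (Tseq (nk k) + t₁)) + α (m (Tseq (nk k) + t₁)) := by
      have := hm_succ _ h01
      rwa [htsucc] at this
    have e3 : α (m (Tseq (nk k) + t₁)) ≤ α 0 := hαanti (Nat.zero_le _)
    linarith
  have hscale : ∀ (c : ℝ) (p : E) (W : Finset ℕ),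
      (∑ i ∈ W, α i • (c⁻¹ • H (c • p) (Y (i + 1)) - c⁻¹ • h (c • p)))
        = c⁻¹ • ∑ i ∈ W, α i • (H (c • p) (Y (i + 1)) - h (c • p)) := by
    intro c p W
    rw [Finset.smul_sum]
    apply Finset.sum_congr rfl
    intro i _
    rw [← smul_sub, smul_comm]
  have keyGrid : ∀ p : E, ∀ τ : ℝ, 0 < τ → ∀ εK : ℝ, 0 < εK →
      ∀ᶠ k in atTop, ∀ t₁ t₂ : ℝ, -τ ≤ t₁ → t₁ ≤ t₂ → t₂ ≤ τ →
        ‖∑ i ∈ Finset.Ico (m (Tseq (nk k) + t₁)) (m (Tseq (nk k) + t₂)),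
            α i • ((r (nk k))⁻¹ • H (r (nk k) • p) (Y (i + 1))
              - (r (nk k))⁻¹ • h (r (nk k) • p))‖ ≤ εK := by
    intro p τ hτ εK hεK
    have hconv : Tendsto (fun c : ℝ => c⁻¹ • h (c • p)) atTop (nhds (hinf p)) :=
      (hunif {p} isCompact_singleton).tendsto_at rfl
    have hconvk : Tendsto (fun k => (r (nk k))⁻¹ • h (r (nk k) • p)) atTop (nhds (hinf p)) :=
      hconv.comp hnk_div
    set Λ : ℝ := 2 * τ + α 0 with hΛdef
    have hΛpos : 0 < Λ := by have := hα_pos 0; rw [hΛdef]; linarith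
    set η₁ : ℝ := εK / (6 * Λ) with hη₁def
    have hη₁pos : 0 < η₁ := by positivity
    have hmain : ∃ c₁ : ℝ, 1 ≤ c₁ ∧ ‖c₁⁻¹ • h (c₁ • p) - hinf p‖ ≤ η₁ ∧
        (∀ᶠ k in atTop, ∀ t₁ t₂ : ℝ, -τ ≤ t₁ → t₁ ≤ t₂ → t₂ ≤ τ →
          ‖∑ i ∈ Finset.Ico (m (Tseq (nk k) + t₁)) (m (Tseq (nk k) + t₂)),
              α i • ((κ (r (nk k)) - κ c₁) • b p (Y (i + 1)))‖ ≤ εK / 3) := by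
      have hevh : ∀ᶠ c : ℝ in atTop, ‖c⁻¹ • h (c • p) - hinf p‖ ≤ η₁ := by
        filter_upwards [Metric.tendsto_nhds.mp hconv η₁ hη₁pos] with c hc
        rw [dist_eq_norm] at hc
        exact hc.le
      by_cases hA : ∀ c : ℝ, 1 ≤ c → κ c = 0
      · obtain ⟨c₁, hc₁1, hc₁h⟩ := ((eventually_ge_atTop (1:ℝ)).and hevh).exists
        refine ⟨c₁, hc₁1, hc₁h, ?_⟩
        filter_upwards with k t₁ t₂ _ _ _
        rw [hA _ (hR1 (nk k)), hA _ hc₁1]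
        simp [hεK.le]
        positivity
      · push_neg at hA
        obtain ⟨c₂, hc₂1, hc₂ne⟩ := hA
        have hq : 0 < |κ c₂| := abs_pos.2 hc₂ne
        have hevκ : ∀ᶠ c : ℝ in atTop, |κ c| ≤ |κ c₂| / 2 := by
          filter_upwards [Metric.tendsto_nhds.mp hκ (|κ c₂| / 2) (by positivity)] with c hc
          rw [Real.dist_eq, sub_zero] at hc
          exact hc.le
        obtain ⟨c₃, hc₃1, hc₃le⟩ := ((eventually_ge_atTop (1:ℝ)).and hevκ).exists
        set Δ : ℝ := κ c₂ - κ c₃ with hΔdef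
        have hΔ : |κ c₂| / 2 ≤ |Δ| := by
          have := abs_sub_abs_le_abs_sub (κ c₂) (κ c₃)
          rw [hΔdef]
          linarith
        have hΔpos : 0 < |Δ| := by linarith
        have hΔne : Δ ≠ 0 := by
          intro hh
          rw [hh] at hΔpos
          simp at hΔpos
        set Cb0 : ℝ := ‖c₂⁻¹ • h (c₂ • p) - c₃⁻¹ • h (c₃ • p)‖ with hCb0def
        set CB : ℝ := |Δ|⁻¹ * (2 + Λ * Cb0) with hCBdef
        have hCBpos : 0 ≤ CB := by
          rw [hCBdef]
          have : (0:ℝ) ≤ Cb0 := norm_nonneg _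
          positivity
        set η₂ : ℝ := εK / (6 * (CB + 1)) with hη₂def
        have hη₂pos : 0 < η₂ := by positivity
        have hevκ2 : ∀ᶠ c : ℝ in atTop, |κ c| ≤ η₂ := by
          filter_upwards [Metric.tendsto_nhds.mp hκ η₂ hη₂pos] with c hc
          rw [Real.dist_eq, sub_zero] at hc
          exact hc.le
        obtain ⟨c₁, ⟨hc₁1, hc₁h⟩, hc₁κ⟩ :=
          (((eventually_ge_atTop (1:ℝ)).and hevh).and hevκ2).exists
        refine ⟨c₁, hc₁1, hc₁h, ?_⟩
        have hκRk : ∀ᶠ k in atTop, |κ (r (nk k))| ≤ η₂ := hnk_div.eventually hevκ2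
        filter_upwards [hrH (c₂ • p) τ hτ 1 one_pos, hrH (c₃ • p) τ hτ 1 one_pos,
          hLenle τ hτ, hκRk] with k hk2 hk3 hkL hkκ t₁ t₂ h1 h2 h3
        set W := Finset.Ico (m (Tseq (nk k) + t₁)) (m (Tseq (nk k) + t₂)) with hWdef
        have hLen0 : (0:ℝ) ≤ ∑ i ∈ W, α i := Finset.sum_nonneg fun i _ => (hα_pos i).le
        -- identity for Δ • b
        have hbid : ∀ y, Δ • b p y = (c₂⁻¹ • H (c₂ • p) y - c₂⁻¹ • h (c₂ • p))
            - (c₃⁻¹ • H (c₃ • p) y - c₃⁻¹ • h (c₃ • p))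
            + (c₂⁻¹ • h (c₂ • p) - c₃⁻¹ • h (c₃ • p)) := by
          intro y
          rw [hΔdef, sub_smul, ← hHc c₂ hc₂1 p y, ← hHc c₃ hc₃1 p y]
          abel
        have hsplit : ∑ i ∈ W, α i • (Δ • b p (Y (i + 1)))
            = (∑ i ∈ W, α i • (c₂⁻¹ • H (c₂ • p) (Y (i + 1)) - c₂⁻¹ • h (c₂ • p)))
              - (∑ i ∈ W, α i • (c₃⁻¹ • H (c₃ • p) (Y (i + 1)) - c₃⁻¹ • h (c₃ • p)))
              + (∑ i ∈ W, α i) • (c₂⁻¹ • h (c₂ • p) - c₃⁻¹ • h (c₃ • p)) := by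
          rw [← Finset.sum_sub_distrib, Finset.sum_smul, ← Finset.sum_add_distrib]
          apply Finset.sum_congr rfl
          intro i _
          rw [hbid (Y (i + 1)), smul_add, smul_sub]
        have hnorm_b : ‖∑ i ∈ W, α i • (Δ • b p (Y (i + 1)))‖ ≤ 2 + Λ * Cb0 := by
          rw [hsplit]
          have n1 : ‖∑ i ∈ W, α i • (c₂⁻¹ • H (c₂ • p) (Y (i + 1)) - c₂⁻¹ • h (c₂ • p))‖ ≤ 1 := by
            rw [hscale c₂ p W, norm_smul, Real.norm_eq_abs,
              abs_of_pos (by positivity : (0:ℝ) < c₂⁻¹)]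
            calc c₂⁻¹ * ‖∑ i ∈ W, α i • (H (c₂ • p) (Y (i + 1)) - h (c₂ • p))‖
                ≤ 1 * 1 := by
                  apply mul_le_mul _ (hk2 t₁ t₂ h1 h2 h3) (norm_nonneg _) zero_le_one
                  rw [inv_le_one_iff₀]
                  right; exact hc₂1
              _ = 1 := by ring
          have n2 : ‖∑ i ∈ W, α i • (c₃⁻¹ • H (c₃ • p) (Y (i + 1)) - c₃⁻¹ • h (c₃ • p))‖ ≤ 1 := by
            rw [hscale c₃ p W, norm_smul, Real.norm_eq_abs,
              abs_of_pos (by positivity : (0:ℝ) < c₃⁻¹)]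
            calc c₃⁻¹ * ‖∑ i ∈ W, α i • (H (c₃ • p) (Y (i + 1)) - h (c₃ • p))‖
                ≤ 1 * 1 := by
                  apply mul_le_mul _ (hk3 t₁ t₂ h1 h2 h3) (norm_nonneg _) zero_le_one
                  rw [inv_le_one_iff₀]
                  right; exact hc₃1
              _ = 1 := by ring
          have n3 : ‖(∑ i ∈ W, α i) • (c₂⁻¹ • h (c₂ • p) - c₃⁻¹ • h (c₃ • p))‖ ≤ Λ * Cb0 := by
            rw [norm_smul, Real.norm_eq_abs, abs_of_nonneg hLen0, ← hCb0def]
            apply mul_le_mul (hkL t₁ t₂ h1 h2 h3) le_rfl (norm_nonneg _) hΛpos.le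
          refine le_trans (norm_add_le _ _) (le_trans (add_le_add (norm_sub_le _ _) le_rfl) ?_)
          linarith [n1, n2, n3]
        have hfactor : ∑ i ∈ W, α i • ((κ (r (nk k)) - κ c₁) • b p (Y (i + 1)))
            = ((κ (r (nk k)) - κ c₁) * Δ⁻¹) • ∑ i ∈ W, α i • (Δ • b p (Y (i + 1))) := by
          rw [Finset.smul_sum]
          apply Finset.sum_congr rfl
          intro i _
          rw [smul_comm ((κ (r (nk k)) - κ c₁) * Δ⁻¹) (α i)]
          congr 1
          rw [smul_smul, mul_assoc, inv_mul_cancel₀ hΔne, mul_one]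
        rw [hfactor, norm_smul, Real.norm_eq_abs]
        have habs : |(κ (r (nk k)) - κ c₁) * Δ⁻¹| ≤ 2 * η₂ * |Δ|⁻¹ := by
          rw [abs_mul, abs_inv]
          apply mul_le_mul _ le_rfl (by positivity) (by positivity)
          calc |κ (r (nk k)) - κ c₁| ≤ |κ (r (nk k))| + |κ c₁| := abs_sub _ _
            _ ≤ η₂ + η₂ := add_le_add hkκ hc₁κ
            _ = 2 * η₂ := by ring
        calc |(κ (r (nk k)) - κ c₁) * Δ⁻¹| * ‖∑ i ∈ W, α i • (Δ • b p (Y (i + 1)))‖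
            ≤ (2 * η₂ * |Δ|⁻¹) * (2 + Λ * Cb0) := by
              apply mul_le_mul habs hnorm_b (norm_nonneg _) (by positivity)
          _ = 2 * η₂ * CB := by rw [hCBdef]; ring
          _ ≤ εK / 3 := by
              have h1 : 2 * η₂ * CB = εK * CB / (3 * (CB + 1)) := by
                rw [hη₂def]; field_simp; ring
              rw [h1, div_le_div_iff₀ (by positivity) (by norm_num : (0:ℝ) < 3)]
              nlinarith [hεK.le, hCBpos]
    obtain ⟨c₁, hc₁1, hc₁h, hc₁ev⟩ := hmain
    have hc₁pos : (0:ℝ) < c₁ := lt_of_lt_of_le one_pos hc₁1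
    have hεK6 : 0 < εK / 3 := by positivity
    have hevR : ∀ᶠ k in atTop, ‖(r (nk k))⁻¹ • h (r (nk k) • p) - hinf p‖ ≤ η₁ := by
      filter_upwards [Metric.tendsto_nhds.mp hconvk η₁ hη₁pos] with k hc
      rw [dist_eq_norm] at hc
      exact hc.le
    filter_upwards [hrH (c₁ • p) τ hτ (εK / 3) hεK6, hc₁ev, hLenle τ hτ, hevR]
      with k hk1 hk2 hkL hkR t₁ t₂ h1 h2 h3
    set R := r (nk k) with hRdef
    have hRge : (1:ℝ) ≤ R := hR1 (nk k)
    have hRp : (0:ℝ) < R := hRpos (nk k)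
    set W := Finset.Ico (m (Tseq (nk k) + t₁)) (m (Tseq (nk k) + t₂)) with hWdef
    have hLen0 : (0:ℝ) ≤ ∑ i ∈ W, α i := Finset.sum_nonneg fun i _ => (hα_pos i).le
    have hident : ∀ i : ℕ,
        α i • (R⁻¹ • H (R • p) (Y (i + 1)) - R⁻¹ • h (R • p))
          = α i • (c₁⁻¹ • H (c₁ • p) (Y (i + 1)) - c₁⁻¹ • h (c₁ • p))
            + α i • ((κ R - κ c₁) • b p (Y (i + 1)))
            + α i • (c₁⁻¹ • h (c₁ • p) - R⁻¹ • h (R • p)) := by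
      intro i
      rw [← smul_add, ← smul_add]
      congr 1
      have e1 : R⁻¹ • H (R • p) (Y (i + 1))
          = Hinf p (Y (i + 1)) + κ R • b p (Y (i + 1)) := by
        have := hHc R hRge p (Y (i + 1))
        linear_combination (norm := abel) this
      have e2 : c₁⁻¹ • H (c₁ • p) (Y (i + 1))
          = Hinf p (Y (i + 1)) + κ c₁ • b p (Y (i + 1)) := by
        have := hHc c₁ hc₁1 p (Y (i + 1))
        linear_combination (norm := abel) this
      rw [e1, e2, sub_smul]
      abel
    have hsum_split : ∑ i ∈ W, α i • (R⁻¹ • H (R • p) (Y (i + 1)) - R⁻¹ • h (R • p))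
        = (∑ i ∈ W, α i • (c₁⁻¹ • H (c₁ • p) (Y (i + 1)) - c₁⁻¹ • h (c₁ • p)))
          + (∑ i ∈ W, α i • ((κ R - κ c₁) • b p (Y (i + 1))))
          + (∑ i ∈ W, α i) • (c₁⁻¹ • h (c₁ • p) - R⁻¹ • h (R • p)) := by
      rw [Finset.sum_smul, ← Finset.sum_add_distrib, ← Finset.sum_add_distrib]
      exact Finset.sum_congr rfl fun i _ => hident i
    rw [hsum_split]
    have n1 : ‖∑ i ∈ W, α i • (c₁⁻¹ • H (c₁ • p) (Y (i + 1)) - c₁⁻¹ • h (c₁ • p))‖ ≤ εK / 3 := by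
      rw [hscale c₁ p W, norm_smul, Real.norm_eq_abs, abs_of_pos (by positivity : (0:ℝ) < c₁⁻¹)]
      calc c₁⁻¹ * ‖∑ i ∈ W, α i • (H (c₁ • p) (Y (i + 1)) - h (c₁ • p))‖
          ≤ 1 * (εK / 3) := by
            apply mul_le_mul _ (hk1 t₁ t₂ h1 h2 h3) (norm_nonneg _) zero_le_one
            rw [inv_le_one_iff₀]
            right; exact hc₁1
        _ = εK / 3 := by ring
    have n2 : ‖∑ i ∈ W, α i • ((κ R - κ c₁) • b p (Y (i + 1)))‖ ≤ εK / 3 := hk2 t₁ t₂ h1 h2 h3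
    have n3 : ‖(∑ i ∈ W, α i) • (c₁⁻¹ • h (c₁ • p) - R⁻¹ • h (R • p))‖ ≤ εK / 3 := by
      rw [norm_smul, Real.norm_eq_abs, abs_of_nonneg hLen0]
      have hd : ‖c₁⁻¹ • h (c₁ • p) - R⁻¹ • h (R • p)‖ ≤ 2 * η₁ := by
        calc ‖c₁⁻¹ • h (c₁ • p) - R⁻¹ • h (R • p)‖
            ≤ ‖c₁⁻¹ • h (c₁ • p) - hinf p‖ + ‖R⁻¹ • h (R • p) - hinf p‖ := by
              rw [← norm_neg (R⁻¹ • h (R • p) - hinf p)]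
              refine le_trans (le_of_eq ?_) (norm_add_le _ _)
              congr 1
              abel
          _ ≤ η₁ + η₁ := add_le_add hc₁h hkR
          _ = 2 * η₁ := by ring
      calc (∑ i ∈ W, α i) * ‖c₁⁻¹ • h (c₁ • p) - R⁻¹ • h (R • p)‖
          ≤ Λ * (2 * η₁) := by
            apply mul_le_mul (hkL t₁ t₂ h1 h2 h3) hd (norm_nonneg _) hΛpos.le
        _ = εK / 3 := by rw [hη₁def]; field_simp; ring
    refine le_trans (norm_add_le _ _) (le_trans (add_le_add (norm_add_le _ _) le_rfl) ?_)
    linarith [n1, n2, n3]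
  -- main approximation estimate
  have approx : ∀ εA : ℝ, 0 < εA → ∀ᶠ k in atTop, ∀ u ∈ Set.Icc 0 s,
      ‖X k u - X k 0 - ∫ v in (0:ℝ)..u, (r (nk k))⁻¹ • h (x (m (Tseq (nk k) + v)))‖ ≤ εA := by
    intro εA hεA
    have hIccsub : Set.Icc (0:ℝ) s ⊆ Set.Ico 0 T :=
      fun v hv => ⟨hv.1, lt_of_le_of_lt hv.2 hsT⟩
    have hxlc : ContinuousOn xlim (Set.Icc 0 s) := hxlim_cont.mono hIccsub
    obtain ⟨B, hB⟩ : ∃ B : ℝ, ∀ u ∈ Set.Icc (0:ℝ) s, ‖xlim u‖ ≤ B := by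
      obtain ⟨u0, _, hu0⟩ := isCompact_Icc.exists_isMaxOn (Set.nonempty_Icc.2 hs0) hxlc.norm
      exact ⟨‖xlim u0‖, fun u hu => hu0 hu⟩
    set τ : ℝ := s + 1 with hτdef
    have hτpos : 0 < τ := by rw [hτdef]; linarith
    set CL : ℝ := 2 * Lbar * τ + 1 with hCLdef
    have hCL : 0 < CL := by
      rw [hCLdef]
      have := mul_nonneg (mul_nonneg (by norm_num : (0:ℝ) ≤ 2) hLbar) hτpos.le
      linarith
    set δ : ℝ := εA / (4 * CL) with hδdef
    have hδpos : 0 < δ := by rw [hδdef]; positivity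
    obtain ⟨δ2, hδ2pos, hδ2⟩ := Metric.uniformContinuousOn_iff.1
      (isCompact_Icc.uniformContinuousOn_of_continuous hxlc) (δ / 4) (by positivity)
    set δm : ℝ := δ2 / 2 with hδmdef
    have hδmpos : 0 < δm := by rw [hδmdef]; positivity
    have hδmlt : δm < δ2 := by rw [hδmdef]; linarith
    set J : ℕ := ⌈s / δm⌉₊ + 1 with hJdef
    have hJpos : (0:ℝ) < (J:ℝ) := by
      rw [hJdef]; push_cast; positivity
    set mesh : ℝ := s / J with hmeshdef
    have hmesh0 : 0 ≤ mesh := by rw [hmeshdef]; positivity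
    have hJmesh : (J:ℝ) * mesh = s := by
      rw [hmeshdef]; field_simp
    have hmeshle : mesh ≤ δm := by
      rw [hmeshdef, div_le_iff₀ hJpos]
      have h1 : s / δm ≤ (⌈s / δm⌉₊ : ℝ) := Nat.le_ceil _
      have h2 : s ≤ δm * (⌈s / δm⌉₊ : ℝ) := by
        rw [← div_le_iff₀' hδmpos]
        exact h1
      rw [hJdef]
      push_cast
      have h3 : δm * ((⌈s / δm⌉₊ : ℝ) + 1) = δm * (⌈s / δm⌉₊ : ℝ) + δm := by ring
      rw [h3]
      linarith [hδmpos.le]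
    have hgrid_mem : ∀ j : ℕ, j ≤ J → (j:ℝ) * mesh ∈ Set.Icc (0:ℝ) s := by
      intro j hj
      constructor
      · positivity
      · calc (j:ℝ) * mesh ≤ (J:ℝ) * mesh := by
              apply mul_le_mul_of_nonneg_right _ hmesh0
              exact_mod_cast hj
          _ = s := hJmesh
    set εg : ℝ := εA / (4 * J) with hεgdef
    have hεgpos : 0 < εg := by rw [hεgdef]; positivity
    set Ca : ℝ := Lbar * (B + 1) + ‖h 0‖ + 1 with hCadef
    have hCa : 0 < Ca := by
      rw [hCadef]
      have h1 : 0 ≤ B := le_trans (norm_nonneg _) (hB 0 ⟨le_rfl, hs0⟩)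
      have h2 : (0:ℝ) ≤ ‖h 0‖ := norm_nonneg _
      have h3 := mul_nonneg hLbar (by linarith : (0:ℝ) ≤ B + 1)
      linarith
    -- eventualities
    have ev_grid : ∀ᶠ k in atTop, ∀ j ∈ Finset.range J,
        ∀ t₁ t₂ : ℝ, -τ ≤ t₁ → t₁ ≤ t₂ → t₂ ≤ τ →
          ‖∑ i ∈ Finset.Ico (m (Tseq (nk k) + t₁)) (m (Tseq (nk k) + t₂)),
              α i • ((r (nk k))⁻¹ • H (r (nk k) • xlim ((j:ℝ) * mesh)) (Y (i + 1))
                - (r (nk k))⁻¹ • h (r (nk k) • xlim ((j:ℝ) * mesh)))‖ ≤ εg := by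
      rw [Filter.eventually_all_finset]
      intro j _
      exact keyGrid (xlim ((j:ℝ) * mesh)) τ hτpos εg hεgpos
    have ev_close : ∀ᶠ k in atTop, ∀ u ∈ Set.Icc (0:ℝ) s,
        ‖X k u - xlim u‖ ≤ min (δ / 4) 1 := by
      have hmin : 0 < min (δ / 4) 1 := lt_min (by positivity) one_pos
      filter_upwards [Metric.tendstoUniformlyOn_iff.1 hxlim (min (δ / 4) 1) hmin] with k hk u hu
      have := hk u (hIccsub hu)
      rw [dist_eq_norm] at this
      calc ‖X k u - xlim u‖ = ‖xlim u - X k u‖ := norm_sub_rev _ _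
        _ ≤ min (δ / 4) 1 := this.le
    have ev_L : ∀ᶠ k in atTop, ∀ t₁ t₂ : ℝ, -τ ≤ t₁ → t₁ ≤ t₂ → t₂ ≤ τ →
        |∑ i ∈ Finset.Ico (m (Tseq (nk k) + t₁)) (m (Tseq (nk k) + t₂)),
            α i * (L (Y (i + 1)) - Lbar)| ≤ 1 := by
      obtain ⟨NL, hNL⟩ := hrateL τ hτpos 1 one_pos
      filter_upwards [hM_tendsto.eventually_ge_atTop NL] with k hk t₁ t₂ h1 h2 h3
      have := hNL (m (Tseq (nk k))) hk t₁ t₂ h1 h2 h3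
      rwa [hTseq_fix (nk k)] at this
    have ev_α : ∀ᶠ k in atTop, α (m (Tseq (nk k))) ≤ min δm (εA / (2 * Ca)) := by
      have hmin : 0 < min δm (εA / (2 * Ca)) := lt_min hδmpos (by positivity)
      exact (hα_to0.comp hM_tendsto).eventually (eventually_le_nhds hmin)
    filter_upwards [ev_grid, ev_close, ev_L, ev_α] with k hkgrid hkclose hkL hkα
    intro u hu
    set R := r (nk k) with hRdef
    set Tn := Tseq (nk k) with hTndef
    set Mk := m Tn with hMkdef
    have hRge : (1:ℝ) ≤ R := hR1 (nk k)
    have hRp : (0:ℝ) < R := hRpos (nk k)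
    have hTn0 : (0:ℝ) ≤ Tn := hTseq_nonneg (nk k)
    have hTnfix : t Mk = Tn := hTseq_fix (nk k)
    set ju := m (Tn + u) with hjudef
    have hjuM : Mk ≤ ju := by
      rw [hMkdef, hjudef]
      exact hmm (by linarith [hu.1])
    have hTnu0 : (0:ℝ) ≤ Tn + u := by linarith [hu.1]
    have htel := aux_tel α (fun i => H (x i) (Y (i + 1))) x hx Mk ju hjuM
    have hint := aux_step_integral α hα_pos t ht m hm_le hm_max hm_neg
      (fun i => R⁻¹ • h (x i)) Mk Tn hTnfix.symm u hu.1
    have hint' : (∫ v in (0:ℝ)..u, R⁻¹ • h (x (m (Tn + v))))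
        = (∑ i ∈ Finset.Ico Mk ju, α i • (R⁻¹ • h (x i)))
          + (Tn + u - t ju) • (R⁻¹ • h (x ju)) := by
      simpa using hint
    have hXu : X k u = R⁻¹ • x ju := rfl
    have hX0' : X k 0 = R⁻¹ • x Mk := by
      simp only [hX, add_zero]
      rfl
    have hA : X k u - X k 0 - ∫ v in (0:ℝ)..u, R⁻¹ • h (x (m (Tn + v)))
        = (∑ i ∈ Finset.Ico Mk ju,
            α i • (R⁻¹ • H (x i) (Y (i + 1)) - R⁻¹ • h (x i)))
          - (Tn + u - t ju) • (R⁻¹ • h (x ju)) := by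
      rw [hint', hXu, hX0', htel]
      have e1 : R⁻¹ • (x Mk + ∑ i ∈ Finset.Ico Mk ju, α i • H (x i) (Y (i + 1)))
          = R⁻¹ • x Mk + ∑ i ∈ Finset.Ico Mk ju, α i • (R⁻¹ • H (x i) (Y (i + 1))) := by
        rw [smul_add, Finset.smul_sum]
        congr 1
        exact Finset.sum_congr rfl fun i _ => smul_comm _ _ _
      rw [e1]
      simp only [smul_sub]
      rw [Finset.sum_sub_distrib]
      abel
    rw [hA]
    have hjule : t ju ≤ Tn + u := hm_le _ hTnu0
    have hjusucc : Tn + u < t ju + α ju := by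
      have := hm_succ (Tn + u) hTnu0
      rwa [htsucc] at this
    have hαju : α ju ≤ α Mk := hαanti hjuM
    -- second term bound
    have hS2 : ‖(Tn + u - t ju) • (R⁻¹ • h (x ju))‖ ≤ εA / 2 := by
      rw [norm_smul, Real.norm_eq_abs, abs_of_nonneg (by linarith)]
      have hXb : ‖R⁻¹ • x ju‖ ≤ B + 1 := by
        have h1 := hkclose u hu
        have h2 := hB u hu
        rw [hXu] at h1
        calc ‖R⁻¹ • x ju‖ = ‖(R⁻¹ • x ju - xlim u) + xlim u‖ := by rw [sub_add_cancel]
          _ ≤ ‖R⁻¹ • x ju - xlim u‖ + ‖xlim u‖ := norm_add_le _ _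
          _ ≤ min (δ / 4) 1 + B := add_le_add h1 h2
          _ ≤ B + 1 := by
              have := min_le_right (δ / 4) (1:ℝ)
              linarith
      have hhb : ‖R⁻¹ • h (x ju)‖ ≤ Ca := by
        have h3 : ‖h (x ju)‖ ≤ Lbar * ‖x ju‖ + ‖h 0‖ := by
          calc ‖h (x ju)‖ = ‖(h (x ju) - h 0) + h 0‖ := by rw [sub_add_cancel]
            _ ≤ ‖h (x ju) - h 0‖ + ‖h 0‖ := norm_add_le _ _
            _ ≤ Lbar * ‖x ju - 0‖ + ‖h 0‖ := by
                have := hh_lip (x ju) 0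
                linarith
            _ = Lbar * ‖x ju‖ + ‖h 0‖ := by rw [sub_zero]
        have h4 : R⁻¹ * ‖x ju‖ = ‖R⁻¹ • x ju‖ := by
          rw [norm_smul, Real.norm_eq_abs, abs_of_pos (by positivity)]
        calc ‖R⁻¹ • h (x ju)‖ = R⁻¹ * ‖h (x ju)‖ := by
              rw [norm_smul, Real.norm_eq_abs, abs_of_pos (by positivity)]
          _ ≤ R⁻¹ * (Lbar * ‖x ju‖ + ‖h 0‖) := by
              apply mul_le_mul_of_nonneg_left h3 (by positivity)
          _ = Lbar * (R⁻¹ * ‖x ju‖) + R⁻¹ * ‖h 0‖ := by ring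
          _ ≤ Lbar * (B + 1) + 1 * ‖h 0‖ := by
              apply add_le_add
              · apply mul_le_mul_of_nonneg_left _ hLbar
                rw [h4]; exact hXb
              · apply mul_le_mul_of_nonneg_right _ (norm_nonneg _)
                rw [inv_le_one_iff₀]; right; exact hRge
          _ ≤ Ca := by rw [hCadef]; norm_num
      calc (Tn + u - t ju) * ‖R⁻¹ • h (x ju)‖ ≤ (εA / (2 * Ca)) * Ca := by
            apply mul_le_mul _ hhb (norm_nonneg _) (by positivity)
            calc Tn + u - t ju ≤ α ju := by linarith
              _ ≤ α Mk := hαju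
              _ ≤ εA / (2 * Ca) := le_trans hkα (min_le_right _ _)
        _ = εA / 2 := by
            have hCane : Ca ≠ 0 := ne_of_gt hCa
            field_simp
            try ring
    -- first term: partition
    set aP : ℕ → ℕ := fun j => m (Tn + min ((j:ℝ) * mesh) u) with haPdef
    have haPmono : Monotone aP := by
      intro j1 j2 hj
      apply hmm
      have h1 : (j1:ℝ) * mesh ≤ (j2:ℝ) * mesh := by
        apply mul_le_mul_of_nonneg_right _ hmesh0
        exact_mod_cast hj
      have h2 := min_le_min h1 (le_refl u)
      linarith [h2]
    have haP0 : aP 0 = Mk := by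
      simp only [haPdef, Nat.cast_zero, zero_mul, min_eq_left hu.1, add_zero, hMkdef]
    have haPJ : aP J = ju := by
      have hminJ : min ((J:ℝ) * mesh) u = u := min_eq_right (by rw [hJmesh]; exact hu.2)
      simp only [haPdef, hminJ, hjudef]
    have haPM : ∀ j, Mk ≤ aP j := by
      intro j
      rw [← haP0]
      exact haPmono (Nat.zero_le j)
    have hcast1 : ∀ j : ℕ, ((j + 1 : ℕ) : ℝ) = (j:ℝ) + 1 := by
      intro j; push_cast; ring
    -- per-window closeness
    have hclose : ∀ j, j < J → ∀ i ∈ Finset.Ico (aP j) (aP (j + 1)),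
        ‖R⁻¹ • x i - xlim ((j:ℝ) * mesh)‖ ≤ δ := by
      intro j hj i hi
      rw [Finset.mem_Ico] at hi
      have hjmu : (j:ℝ) * mesh ≤ u := by
        by_contra hcon
        push_neg at hcon
        have e1 : min ((j:ℝ) * mesh) u = u := min_eq_right hcon.le
        have e2 : min (((j:ℝ) + 1) * mesh) u = u := by
          apply min_eq_right
          have hexp : ((j:ℝ) + 1) * mesh = (j:ℝ) * mesh + mesh := by ring
          linarith [hmesh0, hcon.le]
        have heq : aP j = aP (j + 1) := by
          simp only [haPdef, e1, hcast1 j, e2]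
        omega
      have haPj : aP j = m (Tn + (j:ℝ) * mesh) := by
        simp only [haPdef, min_eq_left hjmu]
      have h0j : (0:ℝ) ≤ Tn + (j:ℝ) * mesh := by
        have : (0:ℝ) ≤ (j:ℝ) * mesh := by positivity
        linarith
      have htaPj_le : t (aP j) ≤ Tn + (j:ℝ) * mesh := by
        rw [haPj]; exact hm_le _ h0j
      have htaPj_gt : Tn + (j:ℝ) * mesh < t (aP j) + α (aP j) := by
        have := hm_succ (Tn + (j:ℝ) * mesh) h0j
        rw [htsucc] at this
        rwa [haPj]
      set ui : ℝ := t i - Tn with huidef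
      have hti_ge : t (aP j) ≤ t i := hts.monotone hi.1
      have hti_lt : t i < t (aP (j + 1)) := hts hi.2
      have h0j1 : (0:ℝ) ≤ Tn + min (((j:ℝ) + 1) * mesh) u := by
        have : (0:ℝ) ≤ min (((j:ℝ) + 1) * mesh) u := le_min (by positivity) hu.1
        linarith
      have htaPj1_le : t (aP (j + 1)) ≤ Tn + min (((j:ℝ) + 1) * mesh) u := by
        have : aP (j + 1) = m (Tn + min (((j:ℝ) + 1) * mesh) u) := by
          simp only [haPdef, hcast1 j]
        rw [this]
        exact hm_le _ h0j1
      have hαaPj : α (aP j) ≤ δm := by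
        calc α (aP j) ≤ α Mk := hαanti (haPM j)
          _ ≤ δm := le_trans hkα (min_le_left _ _)
      have hui0 : 0 ≤ ui := by
        have : t Mk ≤ t i := hts.monotone (le_trans (haPM j) hi.1)
        rw [huidef, ← hTnfix]
        linarith
      have huiu : ui < u := by
        have h5 : min (((j:ℝ) + 1) * mesh) u ≤ u := min_le_right _ _
        rw [huidef]
        linarith
      have huiIcc : ui ∈ Set.Icc (0:ℝ) s := ⟨hui0, by linarith [hu.2]⟩
      have hmi : m (Tn + ui) = i := by
        rw [huidef, add_sub_cancel]
        exact hmt i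
      have hdist : dist ui ((j:ℝ) * mesh) < δ2 := by
        rw [Real.dist_eq, abs_lt]
        constructor
        · -- -(δ2) < ui - j*mesh, i.e. j*mesh - ui < δ2; ui ≥ j*mesh - α (aP j)
          have : (j:ℝ) * mesh - α (aP j) ≤ ui := by
            rw [huidef]
            linarith
          linarith
        · -- ui - j*mesh < δ2; ui < (j+1)*mesh
          have h5 : min (((j:ℝ) + 1) * mesh) u ≤ ((j:ℝ) + 1) * mesh := min_le_left _ _
          have : ui < ((j:ℝ) + 1) * mesh := by
            rw [huidef]
            linarith
          have hexp : ((j:ℝ) + 1) * mesh = (j:ℝ) * mesh + mesh := by ring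
          linarith [hmeshle, hδmlt]
      have hxld := hδ2 ui huiIcc ((j:ℝ) * mesh) (hgrid_mem j hj.le) hdist
      have hXui : X k ui = R⁻¹ • x i := by
        show R⁻¹ • x (m (Tn + ui)) = R⁻¹ • x i
        rw [hmi]
      have hclose1 : ‖R⁻¹ • x i - xlim ui‖ ≤ δ / 4 := by
        have := hkclose ui huiIcc
        rw [hXui] at this
        exact le_trans this (min_le_left _ _)
      have hclose2 : ‖xlim ui - xlim ((j:ℝ) * mesh)‖ ≤ δ / 4 := by
        rw [← dist_eq_norm]
        exact hxld.le
      calc ‖R⁻¹ • x i - xlim ((j:ℝ) * mesh)‖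
          = ‖(R⁻¹ • x i - xlim ui) + (xlim ui - xlim ((j:ℝ) * mesh))‖ := by
            congr 1; abel
        _ ≤ ‖R⁻¹ • x i - xlim ui‖ + ‖xlim ui - xlim ((j:ℝ) * mesh)‖ := norm_add_le _ _
        _ ≤ δ / 4 + δ / 4 := add_le_add hclose1 hclose2
        _ ≤ δ := by linarith
    -- partition the sums
    have hpart := aux_part aP haPmono
      (fun i => α i • (R⁻¹ • H (x i) (Y (i + 1)) - R⁻¹ • h (x i))) J
    rw [haP0, haPJ] at hpart
    have hpartR := aux_part aP haPmono (fun i => α i * (L (Y (i + 1)) + Lbar)) J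
    rw [haP0, haPJ] at hpartR
    -- per-window bound
    have hinner : ∀ j ∈ Finset.range J,
        ‖∑ i ∈ Finset.Ico (aP j) (aP (j + 1)),
            α i • (R⁻¹ • H (x i) (Y (i + 1)) - R⁻¹ • h (x i))‖
          ≤ εg + δ * ∑ i ∈ Finset.Ico (aP j) (aP (j + 1)), α i * (L (Y (i + 1)) + Lbar) := by
      intro j hjr
      rw [Finset.mem_range] at hjr
      have hid : ∀ i ∈ Finset.Ico (aP j) (aP (j + 1)),
          α i • (R⁻¹ • H (x i) (Y (i + 1)) - R⁻¹ • h (x i))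
            = α i • (R⁻¹ • H (R • xlim ((j:ℝ) * mesh)) (Y (i + 1))
                - R⁻¹ • h (R • xlim ((j:ℝ) * mesh)))
              + α i • ((R⁻¹ • H (x i) (Y (i + 1)) - R⁻¹ • H (R • xlim ((j:ℝ) * mesh)) (Y (i + 1)))
                - (R⁻¹ • h (x i) - R⁻¹ • h (R • xlim ((j:ℝ) * mesh)))) := by
        intro i _
        rw [← smul_add]
        congr 1
        abel
      rw [Finset.sum_congr rfl hid, Finset.sum_add_distrib]
      have hgb : ‖∑ i ∈ Finset.Ico (aP j) (aP (j + 1)),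
          α i • (R⁻¹ • H (R • xlim ((j:ℝ) * mesh)) (Y (i + 1))
            - R⁻¹ • h (R • xlim ((j:ℝ) * mesh)))‖ ≤ εg := by
        have ht1 : -τ ≤ min ((j:ℝ) * mesh) u := by
          have : (0:ℝ) ≤ min ((j:ℝ) * mesh) u := le_min (by positivity) hu.1
          linarith
        have ht2 : min ((j:ℝ) * mesh) u ≤ min (((j:ℝ) + 1) * mesh) u := by
          apply min_le_min_right
          have hexp : ((j:ℝ) + 1) * mesh = (j:ℝ) * mesh + mesh := by ring
          linarith [hmesh0]
        have ht3 : min (((j:ℝ) + 1) * mesh) u ≤ τ := by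
          refine le_trans (min_le_right _ _) ?_
          rw [hτdef]
          linarith [hu.2]
        have := hkgrid j (Finset.mem_range.2 hjr)
          (min ((j:ℝ) * mesh) u) (min (((j:ℝ) + 1) * mesh) u) ht1 ht2 ht3
        have heq : Finset.Ico (m (Tn + min ((j:ℝ) * mesh) u))
            (m (Tn + min (((j:ℝ) + 1) * mesh) u)) = Finset.Ico (aP j) (aP (j + 1)) := by
          simp only [haPdef, hcast1 j]
        rwa [heq] at this
      have heb : ‖∑ i ∈ Finset.Ico (aP j) (aP (j + 1)),
          α i • ((R⁻¹ • H (x i) (Y (i + 1)) - R⁻¹ • H (R • xlim ((j:ℝ) * mesh)) (Y (i + 1)))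
            - (R⁻¹ • h (x i) - R⁻¹ • h (R • xlim ((j:ℝ) * mesh))))‖
          ≤ δ * ∑ i ∈ Finset.Ico (aP j) (aP (j + 1)), α i * (L (Y (i + 1)) + Lbar) := by
        refine le_trans (norm_sum_le _ _) ?_
        rw [Finset.mul_sum]
        apply Finset.sum_le_sum
        intro i hi
        have hcl := hclose j hjr i hi
        have hsm : ∀ w : E, R⁻¹ • x i - R⁻¹ • (R • w) = R⁻¹ • x i - w := by
          intro w
          rw [inv_smul_smul₀ (ne_of_gt hRp)]
        have hHpart : ‖R⁻¹ • H (x i) (Y (i + 1))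
            - R⁻¹ • H (R • xlim ((j:ℝ) * mesh)) (Y (i + 1))‖
            ≤ L (Y (i + 1)) * δ := by
          rw [← smul_sub, norm_smul, Real.norm_eq_abs, abs_of_pos (by positivity)]
          calc R⁻¹ * ‖H (x i) (Y (i + 1)) - H (R • xlim ((j:ℝ) * mesh)) (Y (i + 1))‖
              ≤ R⁻¹ * (L (Y (i + 1)) * ‖x i - R • xlim ((j:ℝ) * mesh)‖) := by
                apply mul_le_mul_of_nonneg_left (hH_lip _ _ _) (by positivity)
            _ = L (Y (i + 1)) * ‖R⁻¹ • (x i - R • xlim ((j:ℝ) * mesh))‖ := by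
                rw [norm_smul, Real.norm_eq_abs, abs_of_pos (by positivity : (0:ℝ) < R⁻¹)]
                ring
            _ ≤ L (Y (i + 1)) * δ := by
                apply mul_le_mul_of_nonneg_left _ (hL_nonneg _)
                rw [smul_sub, hsm]
                exact hcl
        have hhpart : ‖R⁻¹ • h (x i) - R⁻¹ • h (R • xlim ((j:ℝ) * mesh))‖ ≤ Lbar * δ := by
          rw [← smul_sub, norm_smul, Real.norm_eq_abs, abs_of_pos (by positivity)]
          calc R⁻¹ * ‖h (x i) - h (R • xlim ((j:ℝ) * mesh))‖
              ≤ R⁻¹ * (Lbar * ‖x i - R • xlim ((j:ℝ) * mesh)‖) := by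
                apply mul_le_mul_of_nonneg_left (hh_lip _ _) (by positivity)
            _ = Lbar * ‖R⁻¹ • (x i - R • xlim ((j:ℝ) * mesh))‖ := by
                rw [norm_smul, Real.norm_eq_abs, abs_of_pos (by positivity : (0:ℝ) < R⁻¹)]
                ring
            _ ≤ Lbar * δ := by
                apply mul_le_mul_of_nonneg_left _ hLbar
                rw [smul_sub, hsm]
                exact hcl
        calc ‖α i • ((R⁻¹ • H (x i) (Y (i + 1))
              - R⁻¹ • H (R • xlim ((j:ℝ) * mesh)) (Y (i + 1)))
              - (R⁻¹ • h (x i) - R⁻¹ • h (R • xlim ((j:ℝ) * mesh))))‖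
            = α i * ‖(R⁻¹ • H (x i) (Y (i + 1))
              - R⁻¹ • H (R • xlim ((j:ℝ) * mesh)) (Y (i + 1)))
              - (R⁻¹ • h (x i) - R⁻¹ • h (R • xlim ((j:ℝ) * mesh)))‖ := by
              rw [norm_smul, Real.norm_eq_abs, abs_of_pos (hα_pos i)]
          _ ≤ α i * (L (Y (i + 1)) * δ + Lbar * δ) := by
              apply mul_le_mul_of_nonneg_left _ (hα_pos i).le
              exact le_trans (norm_sub_le _ _) (add_le_add hHpart hhpart)
          _ = δ * (α i * (L (Y (i + 1)) + Lbar)) := by ring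
      calc ‖(∑ i ∈ Finset.Ico (aP j) (aP (j + 1)),
            α i • (R⁻¹ • H (R • xlim ((j:ℝ) * mesh)) (Y (i + 1))
              - R⁻¹ • h (R • xlim ((j:ℝ) * mesh))))
          + ∑ i ∈ Finset.Ico (aP j) (aP (j + 1)),
            α i • ((R⁻¹ • H (x i) (Y (i + 1)) - R⁻¹ • H (R • xlim ((j:ℝ) * mesh)) (Y (i + 1)))
              - (R⁻¹ • h (x i) - R⁻¹ • h (R • xlim ((j:ℝ) * mesh))))‖
          ≤ ‖∑ i ∈ Finset.Ico (aP j) (aP (j + 1)),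
            α i • (R⁻¹ • H (R • xlim ((j:ℝ) * mesh)) (Y (i + 1))
              - R⁻¹ • h (R • xlim ((j:ℝ) * mesh)))‖
            + ‖∑ i ∈ Finset.Ico (aP j) (aP (j + 1)),
              α i • ((R⁻¹ • H (x i) (Y (i + 1)) - R⁻¹ • H (R • xlim ((j:ℝ) * mesh)) (Y (i + 1)))
                - (R⁻¹ • h (x i) - R⁻¹ • h (R • xlim ((j:ℝ) * mesh))))‖ := norm_add_le _ _
        _ ≤ εg + δ * ∑ i ∈ Finset.Ico (aP j) (aP (j + 1)),
              α i * (L (Y (i + 1)) + Lbar) := add_le_add hgb heb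
    -- L-sum bound
    have hLsum : ∑ i ∈ Finset.Ico Mk ju, α i * (L (Y (i + 1)) + Lbar) ≤ CL := by
      have hwin := hkL 0 u (by linarith) hu.1 (by rw [hτdef]; linarith [hu.2])
      rw [add_zero] at hwin
      have hsum_alpha : ∑ i ∈ Finset.Ico Mk ju, α i ≤ s := by
        rw [ht_Ico Mk ju hjuM, hTnfix]
        linarith [hu.2, hjule]
      have hsplitL : ∑ i ∈ Finset.Ico Mk ju, α i * (L (Y (i + 1)) + Lbar)
          = (∑ i ∈ Finset.Ico Mk ju, α i * (L (Y (i + 1)) - Lbar))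
            + 2 * Lbar * ∑ i ∈ Finset.Ico Mk ju, α i := by
        rw [Finset.mul_sum, ← Finset.sum_add_distrib]
        exact Finset.sum_congr rfl fun i _ => by ring
      rw [hsplitL]
      have h1 : ∑ i ∈ Finset.Ico Mk ju, α i * (L (Y (i + 1)) - Lbar) ≤ 1 := by
        have := le_abs_self (∑ i ∈ Finset.Ico Mk ju, α i * (L (Y (i + 1)) - Lbar))
        calc ∑ i ∈ Finset.Ico Mk ju, α i * (L (Y (i + 1)) - Lbar)
            ≤ |∑ i ∈ Finset.Ico Mk ju, α i * (L (Y (i + 1)) - Lbar)| := this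
          _ ≤ 1 := hwin
      have h2 : 2 * Lbar * ∑ i ∈ Finset.Ico Mk ju, α i ≤ 2 * Lbar * s := by
        apply mul_le_mul_of_nonneg_left hsum_alpha (by positivity)
      have h3 : 2 * Lbar * s ≤ 2 * Lbar * (s + 1) :=
        mul_le_mul_of_nonneg_left (by linarith) (by positivity)
      rw [hCLdef, hτdef]
      linarith
    -- final assembly of S1
    have hS1 : ‖∑ i ∈ Finset.Ico Mk ju,
        α i • (R⁻¹ • H (x i) (Y (i + 1)) - R⁻¹ • h (x i))‖ ≤ εA / 2 := by
      rw [← hpart]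
      calc ‖∑ j ∈ Finset.range J, ∑ i ∈ Finset.Ico (aP j) (aP (j + 1)),
            α i • (R⁻¹ • H (x i) (Y (i + 1)) - R⁻¹ • h (x i))‖
          ≤ ∑ j ∈ Finset.range J, ‖∑ i ∈ Finset.Ico (aP j) (aP (j + 1)),
              α i • (R⁻¹ • H (x i) (Y (i + 1)) - R⁻¹ • h (x i))‖ := norm_sum_le _ _
        _ ≤ ∑ j ∈ Finset.range J, (εg + δ * ∑ i ∈ Finset.Ico (aP j) (aP (j + 1)),
              α i * (L (Y (i + 1)) + Lbar)) := Finset.sum_le_sum hinner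
        _ = (J:ℝ) * εg + δ * ∑ i ∈ Finset.Ico Mk ju, α i * (L (Y (i + 1)) + Lbar) := by
            rw [Finset.sum_add_distrib, Finset.sum_const, Finset.card_range,
              ← Finset.mul_sum, hpartR]
            simp [nsmul_eq_mul]
        _ ≤ εA / 4 + εA / 4 := by
            apply add_le_add
            · have hJne : (J:ℝ) ≠ 0 := ne_of_gt hJpos
              have hJe : (J:ℝ) * εg = εA / 4 := by
                rw [hεgdef]
                field_simp
                try ring
              exact le_of_eq hJe
            · have hd : δ * ∑ i ∈ Finset.Ico Mk ju, α i * (L (Y (i + 1)) + Lbar) ≤ δ * CL :=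
                mul_le_mul_of_nonneg_left hLsum hδpos.le
              have hCLne : CL ≠ 0 := ne_of_gt hCL
              have heq4 : δ * CL = εA / 4 := by
                rw [hδdef]
                field_simp
                try ring
              exact le_of_le_of_eq hd heq4
        _ = εA / 2 := by ring
    calc ‖(∑ i ∈ Finset.Ico Mk ju, α i • (R⁻¹ • H (x i) (Y (i + 1)) - R⁻¹ • h (x i)))
          - (Tn + u - t ju) • (R⁻¹ • h (x ju))‖
        ≤ ‖∑ i ∈ Finset.Ico Mk ju, α i • (R⁻¹ • H (x i) (Y (i + 1)) - R⁻¹ • h (x i))‖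
          + ‖(Tn + u - t ju) • (R⁻¹ • h (x ju))‖ := norm_sub_le _ _
      _ ≤ εA / 2 + εA / 2 := add_le_add hS1 hS2
      _ = εA := by ring
  -- conclusion via Gronwall
  have key : ∀ εZ : ℝ, 0 < εZ → ∀ᶠ k in atTop, ‖X k s - z (nk k) s‖ ≤ εZ := by
    intro εZ hεZ
    have hCexp_pos : (0:ℝ) < Real.exp (Lbar * s) := Real.exp_pos _
    have hε' : 0 < εZ / Real.exp (Lbar * s) := by positivity
    filter_upwards [approx (εZ / Real.exp (Lbar * s)) hε'] with k hk
    set R := r (nk k) with hRdef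
    set Tn := Tseq (nk k) with hTndef
    have hRp : (0:ℝ) < R := hRpos (nk k)
    have hR1' : (1:ℝ) ≤ R := hR1 (nk k)
    have hTn0 : (0:ℝ) ≤ Tn := hTseq_nonneg (nk k)
    set ψ : ℝ → E := fun v => R⁻¹ • h (x (m (Tn + v))) with hψdef
    set ψz : ℝ → E := fun v => R⁻¹ • h (R • z (nk k) v) with hψzdef
    have hII : ∀ a bb : ℝ, IntervalIntegrable ψ volume a bb :=
      aux_step_II α hα_pos t ht m hm_le hm_max hm_neg (fun i => R⁻¹ • h (x i)) Tn
    have hXII : ∀ a bb : ℝ, IntervalIntegrable (X k) volume a bb :=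
      aux_step_II α hα_pos t ht m hm_le hm_max hm_neg (fun i => R⁻¹ • x i) Tn
    have hcont : Continuous h := by
      have hl : LipschitzWith (Real.toNNReal Lbar) h := by
        apply LipschitzWith.of_dist_le_mul
        intro a bb
        rw [dist_eq_norm, dist_eq_norm, Real.coe_toNNReal Lbar hLbar]
        exact hh_lip a bb
      exact hl.continuous
    have hzc : ContinuousOn (z (nk k)) (Set.Icc 0 s) :=
      (hz_cont (nk k)).mono (fun v hv => ⟨hv.1, lt_of_le_of_lt hv.2 hsT⟩)
    have hψzc : ContinuousOn ψz (Set.Icc 0 s) :=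
      ((hcont.comp_continuousOn (hzc.const_smul R)).const_smul R⁻¹)
    have hψzII : ∀ u : ℝ, 0 ≤ u → u ≤ s → IntervalIntegrable ψz volume 0 u := by
      intro u h0u hus
      apply ContinuousOn.intervalIntegrable
      rw [Set.uIcc_of_le h0u]
      exact hψzc.mono (Set.Icc_subset_Icc le_rfl hus)
    have hzcII : ∀ u : ℝ, 0 ≤ u → u ≤ s → IntervalIntegrable (z (nk k)) volume 0 u := by
      intro u h0u hus
      apply ContinuousOn.intervalIntegrable
      rw [Set.uIcc_of_le h0u]
      exact hzc.mono (Set.Icc_subset_Icc le_rfl hus)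
    set φ : ℝ → ℝ := fun u => ‖X k u - z (nk k) u‖ with hφdef
    have hφint : ∀ u : ℝ, 0 ≤ u → u ≤ s → IntervalIntegrable φ volume 0 u := by
      intro u h0u hus
      exact ((hXII 0 u).sub (hzcII u h0u hus)).norm
    have hX0 : X k 0 = R⁻¹ • x (m Tn) := by
      simp only [hX, add_zero, hRdef, hTndef]
    have hzid : ∀ u ∈ Set.Icc (0:ℝ) s, z (nk k) u = X k 0 + ∫ v in (0:ℝ)..u, ψz v := by
      intro u hu
      rw [hz (nk k) u hu.1 (lt_of_le_of_lt hu.2 hsT), hX0]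
    have hψeq : ∀ v : ℝ, ψ v = R⁻¹ • h (R • X k v) := by
      intro v
      have : R • X k v = x (m (Tn + v)) := by
        simp only [hX]
        rw [smul_inv_smul₀ hRp.ne']
      rw [hψdef]
      simp only [this]
    have hpt : ∀ v : ℝ, ‖ψ v - ψz v‖ ≤ Lbar * φ v := by
      intro v
      rw [hψeq v, hψzdef]
      have h1 : ‖R⁻¹ • h (R • X k v) - R⁻¹ • h (R • z (nk k) v)‖
          = R⁻¹ * ‖h (R • X k v) - h (R • z (nk k) v)‖ := by
        rw [← smul_sub, norm_smul, Real.norm_eq_abs, abs_of_pos (by positivity)]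
      rw [h1]
      have h2 : ‖h (R • X k v) - h (R • z (nk k) v)‖ ≤ Lbar * (R * ‖X k v - z (nk k) v‖) := by
        calc ‖h (R • X k v) - h (R • z (nk k) v)‖ ≤ Lbar * ‖R • X k v - R • z (nk k) v‖ :=
              hh_lip _ _
          _ = Lbar * (R * ‖X k v - z (nk k) v‖) := by
              rw [← smul_sub, norm_smul, Real.norm_eq_abs, abs_of_pos hRp]
      calc R⁻¹ * ‖h (R • X k v) - h (R • z (nk k) v)‖
          ≤ R⁻¹ * (Lbar * (R * ‖X k v - z (nk k) v‖)) := by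
            apply mul_le_mul_of_nonneg_left h2 (by positivity)
        _ = Lbar * φ v := by field_simp [hφdef]; ring
    have hineq : ∀ u ∈ Set.Icc (0:ℝ) s,
        φ u ≤ εZ / Real.exp (Lbar * s) + Lbar * ∫ v in (0:ℝ)..u, φ v := by
      intro u hu
      have hid : X k u - z (nk k) u
          = (X k u - X k 0 - ∫ v in (0:ℝ)..u, ψ v) + ∫ v in (0:ℝ)..u, (ψ v - ψz v) := by
        rw [intervalIntegral.integral_sub (hII 0 u) (hψzII u hu.1 hu.2), hzid u hu]
        abel
      have h3 : ‖∫ v in (0:ℝ)..u, (ψ v - ψz v)‖ ≤ Lbar * ∫ v in (0:ℝ)..u, φ v := by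
        calc ‖∫ v in (0:ℝ)..u, (ψ v - ψz v)‖ ≤ ∫ v in (0:ℝ)..u, ‖ψ v - ψz v‖ :=
              intervalIntegral.norm_integral_le_integral_norm hu.1
          _ ≤ ∫ v in (0:ℝ)..u, Lbar * φ v := by
              apply intervalIntegral.integral_mono_on hu.1
                ((hII 0 u).sub (hψzII u hu.1 hu.2)).norm
                ((hφint u hu.1 hu.2).const_mul Lbar)
              intro v _
              exact hpt v
          _ = Lbar * ∫ v in (0:ℝ)..u, φ v := by
              rw [intervalIntegral.integral_const_mul]
      calc φ u = ‖X k u - z (nk k) u‖ := rfl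
        _ ≤ ‖X k u - X k 0 - ∫ v in (0:ℝ)..u, ψ v‖ + ‖∫ v in (0:ℝ)..u, (ψ v - ψz v)‖ := by
            rw [hid]; exact norm_add_le _ _
        _ ≤ εZ / Real.exp (Lbar * s) + Lbar * ∫ v in (0:ℝ)..u, φ v := by
            have := hk u hu
            exact add_le_add this h3
    have hrc : ∀ u ∈ Set.Ico (0:ℝ) s, ContinuousWithinAt φ (Set.Ici u) u := by
      intro u hu
      have hXrc : ContinuousWithinAt (X k) (Set.Ici u) u := by
        set j := m (Tn + u) with hjdef
        have hTnu : (0:ℝ) ≤ Tn + u := by linarith [hu.1]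
        have hδr : 0 < t (j + 1) - (Tn + u) := by
          have := hm_succ (Tn + u) hTnu
          linarith
        have hmem : Set.Ico u (u + (t (j + 1) - (Tn + u))) ∈ nhdsWithin u (Set.Ici u) :=
          Ico_mem_nhdsGE_of_mem ⟨le_rfl, by linarith⟩
        apply ContinuousWithinAt.congr_of_eventuallyEq
          (continuousWithinAt_const : ContinuousWithinAt (fun _ => X k u) (Set.Ici u) u)
        · filter_upwards [hmem] with w hw
          have h1 : t j ≤ Tn + w := le_trans (hm_le (Tn + u) hTnu) (by linarith [hw.1])
          have h2 : Tn + w < t (j + 1) := by linarith [hw.2]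
          simp only [hX]
          rw [aux_m_eq α hα_pos t ht m hm_le hm_max j (Tn + w) h1 h2]
        · rfl
      have hzrc : ContinuousWithinAt (z (nk k)) (Set.Ici u) u := by
        have hcw : ContinuousWithinAt (z (nk k)) (Set.Ico 0 T) u :=
          (hz_cont (nk k)) u ⟨hu.1, lt_of_lt_of_le hu.2 hsT.le⟩
        apply hcw.mono_of_mem_nhdsWithin
        apply mem_nhdsWithin.2
        exact ⟨Set.Iio T, isOpen_Iio, lt_of_lt_of_le hu.2 hsT.le,
          fun v hv => ⟨le_trans hu.1 hv.2, hv.1⟩⟩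
      exact (hXrc.sub hzrc).norm
    have hgron := aux_gronwall (φ := φ) (Kc := Lbar) (εc := εZ / Real.exp (Lbar * s)) (s₀ := s)
      hLbar hε'.le hs0 (fun u => norm_nonneg _) (hφint s hs0 le_rfl) hrc hineq
    calc ‖X k s - z (nk k) s‖ = φ s := rfl
      _ ≤ εZ / Real.exp (Lbar * s) * Real.exp (Lbar * s) := hgron
      _ = εZ := by field_simp
  rw [Metric.tendsto_atTop]
  intro ε hε
  obtain ⟨N, hN⟩ := Filter.eventually_atTop.1 (key (ε / 2) (by linarith))
  refine ⟨N, fun n hn => ?_⟩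
  have := hN n hn
  rw [Real.dist_eq, sub_zero, abs_of_nonneg (norm_nonneg _)]
  calc ‖X n s - z (nk n) s‖ ≤ ε / 2 := this
    _ < ε := by linarith
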